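/- For coprime integers a and q with q ≥ 1, (1/(i·φ(q))) Σ_{χ mod q, χ odd} χ(a) τ(conj(χ)) = sin(2πa/q), where the sum runs over odd Dirichlet characters modulo q. -/

import Mathlib

/-!
The projector `(1 - χ(-1))/2` onto odd characters, together with orthogonality of Dirichlet
characters, gives `∑_{χ odd} χ(a) χ̄(b) = φ(q)/2 · ([a = b] - [-a = b])` for a unit `a`.
Expanding `τ(χ̄) = ∑_b χ̄(b) e(b/q)` then turns the sum into
`φ(q)/2 · (e(a/q) - e(-a/q)) = i φ(q) sin(2πa/q)`.
-/

open scoped Classical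
open Real Complex

/-- The Gauss sum `τ(χ) = ∑_{b=1}^q χ(b) e^{2πib/q}` of a Dirichlet character mod `q`. -/
noncomputable def gaussSumExp {q : ℕ} (χ : DirichletCharacter ℂ q) : ℂ :=
  ∑ b ∈ Finset.range q, χ (b : ZMod q) * Complex.exp (2 * π * I * b / q)

lemma ZMod.sum_range_natCast {M : Type*} [AddCommMonoid M] {q : ℕ} [NeZero q]
    (f : ZMod q → M) : ∑ b ∈ Finset.range q, f b = ∑ x, f x :=
  Finset.sum_nbij' (↑) ZMod.val (by simp) (by simp [ZMod.val_lt])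
    (fun b hb => ZMod.val_cast_of_lt (Finset.mem_range.mp hb)) (by simp) (by simp)

lemma Complex.exp_mul_I_sub_exp_neg_mul_I (z : ℂ) :
    exp (z * I) - exp (-z * I) = 2 * I * sin z := by
  rw [exp_mul_I, exp_mul_I, cos_neg, sin_neg]
  ring

section
variable {q : ℕ} [NeZero q]

lemma gaussSumExp_eq_gaussSum (χ : DirichletCharacter ℂ q) :
    gaussSumExp χ = gaussSum χ ZMod.stdAddChar := by
  rw [gaussSumExp, gaussSum, ← ZMod.sum_range_natCast]
  refine Finset.sum_congr rfl fun b _ => ?_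
  rw [ZMod.stdAddChar_apply, ZMod.toCircle_natCast]

lemma ZMod.stdAddChar_intCast_sub_stdAddChar_neg (a : ℤ) :
    ZMod.stdAddChar (a : ZMod q) - ZMod.stdAddChar (-(a : ZMod q)) =
      2 * I * ((Real.sin (2 * π * a / q) : ℝ) : ℂ) := by
  set z : ℝ := 2 * π * a / q
  rw [← Int.cast_neg, ZMod.stdAddChar_coe, ZMod.stdAddChar_coe, ofReal_sin,
    ← exp_mul_I_sub_exp_neg_mul_I]
  congr 2 <;> simp only [z] <;> push_cast <;> ring

namespace DirichletCharacter

lemma sum_apply_mul_star_apply {a : ZMod q} (ha : IsUnit a) (b : ZMod q) :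
    ∑ χ : DirichletCharacter ℂ q, χ a * star χ b = if a = b then (q.totient : ℂ) else 0 := by
  rw [← sum_char_inv_mul_char_eq ℂ ha b]
  refine Fintype.sum_equiv (Equiv.inv _) _ _ fun χ => ?_
  obtain ⟨u, rfl⟩ := ha
  rw [Equiv.inv_apply, MulChar.star_eq_inv, ZMod.inv_coe_unit,
    MulChar.inv_apply χ (u⁻¹ : (ZMod q)ˣ), Ring.inverse_unit, inv_inv]

lemma sum_odd_apply_mul_star_apply {a : ZMod q} (ha : IsUnit a) (b : ZMod q) :
    ∑ χ : DirichletCharacter ℂ q, (if χ.Odd then χ a * star χ b else 0) =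
      q.totient / 2 * ((if a = b then 1 else 0) - if -a = b then 1 else 0) := by
  have hodd (χ : DirichletCharacter ℂ q) :
      (if χ.Odd then χ a * star χ b else 0) = (χ a * star χ b - χ (-a) * star χ b) / 2 := by
    rw [neg_eq_neg_one_mul, map_mul]
    rcases χ.even_or_odd with hχ | hχ
    · rw [if_neg hχ.not_odd, hχ]; ring
    · rw [if_pos hχ, hχ]; ring
  rw [Finset.sum_congr rfl fun χ _ => hodd χ, ← Finset.sum_div, Finset.sum_sub_distrib,
    sum_apply_mul_star_apply ha, sum_apply_mul_star_apply ha.neg]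
  split_ifs <;> ring

lemma sum_odd_apply_mul_gaussSum_star {a : ZMod q} (ha : IsUnit a) (ψ : AddChar (ZMod q) ℂ) :
    ∑ χ : DirichletCharacter ℂ q, (if χ.Odd then χ a * gaussSum (star χ) ψ else 0) =
      q.totient / 2 * (ψ a - ψ (-a)) := by
  calc ∑ χ : DirichletCharacter ℂ q, (if χ.Odd then χ a * gaussSum (star χ) ψ else 0)
      = ∑ x, (∑ χ : DirichletCharacter ℂ q, if χ.Odd then χ a * star χ x else 0) * ψ x := by
        simp only [gaussSum, Finset.mul_sum, Finset.sum_mul, ite_zero_mul, ← mul_assoc,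
          Finset.ite_sum_zero]
        exact Finset.sum_comm
    _ = q.totient / 2 * (ψ a - ψ (-a)) := by
        simp only [sum_odd_apply_mul_star_apply ha, mul_sub, sub_mul, Finset.sum_sub_distrib,
          mul_ite, mul_one, mul_zero, ite_mul, zero_mul, Finset.sum_ite_eq, Finset.mem_univ,
          if_true]

end DirichletCharacter

end

/-- For coprime `a, q` with `q ≥ 1`,
`(1/(i φ(q))) ∑_{χ mod q odd} χ(a) τ(conj χ) = sin(2πa/q)`. -/
theorem sum_odd_char_gaussSum_eq_sin (a : ℤ) (q : ℕ) (hq : 1 ≤ q)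
    (hco : Int.gcd a q = 1) :
    (1 / (I * (Nat.totient q : ℂ))) *
      ∑ᶠ χ : DirichletCharacter ℂ q,
        (if χ.Odd then χ (a : ZMod q) * gaussSumExp (star χ) else 0) =
      ((Real.sin (2 * π * a / q) : ℝ) : ℂ) := by
  have : NeZero q := ⟨by omega⟩
  have ha : IsUnit (a : ZMod q) :=
    (ZMod.coe_int_isUnit_iff_isCoprime a q).mpr (Int.isCoprime_iff_gcd_eq_one.mpr hco).symm
  have hφ : (q.totient : ℂ) ≠ 0 := by exact_mod_cast (Nat.totient_pos.mpr (by omega)).ne'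
  simp only [finsum_eq_sum_of_fintype, gaussSumExp_eq_gaussSum,
    DirichletCharacter.sum_odd_apply_mul_gaussSum_star ha,
    ZMod.stdAddChar_intCast_sub_stdAddChar_neg]
  field_simp
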